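/- Let η : ℝⁿ → ℝ be C² on a neighborhood of 0 with ∇η(0) = 0 and with B := ∇²η(0) positive definite. Let Q : ℝⁿ → ℝⁿ be defined near 0, differentiable at 0, with Q(0) = 0 and with ∇Q(0) = [[0,0],[0,Θ]] in block form for some invertible m×m matrix Θ. Assume there exist c > 0 and δ > 0 such that ∇η(u)·Q(u) ≤ −c|Q(u)|² for all |u| < δ. Then B∇Q(0) + ∇Q(0)ᵀB = −[[0,0],[0,M]] where M := −(B₄Θ + ΘᵀB₄); in particular ΘᵀB₂ = 0. Moreover M is symmetric and positive definite, and in fact M ≥ 2c ΘᵀΘ in the sense of quadratic forms. -/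

import Mathlib

/-!
Blowing up the dissipation inequality along rays `u = t • v` and letting `t → 0`, the conditions
`∇η(0) = 0` and `Q(0) = 0` turn it into the quadratic inequality
`v ⬝ B ∇Q(0) v ≤ -c |∇Q(0) v|²` for every `v`. For `v = (x, y)` and `∇Q(0) = [[0,0],[0,Θ]]` this
reads `x ⬝ B₂ᵀ Θ y + y ⬝ B₄ Θ y ≤ -c |Θ y|²`. The left side is linear in `x`, so `B₂ᵀ Θ = 0`;
taking `x = 0` and using the symmetry of `B` gives `y ⬝ M y ≥ 2c |Θ y|²`, which is positive for
`y ≠ 0` because `Θ` is invertible.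
-/

open Matrix

/-- The Jacobian matrix of a map at a point: `(jacM f u) i j = ∂fᵢ/∂uⱼ (u)`. -/
noncomputable def jacM {ι : Type*} [Fintype ι] [DecidableEq ι]
    (f : (ι → ℝ) → (ι → ℝ)) (u : ι → ℝ) : Matrix ι ι ℝ :=
  Matrix.of fun i j => fderiv ℝ f u (Pi.single j 1) i

/-- The gradient of a scalar function. -/
noncomputable def gradV {ι : Type*} [Fintype ι] [DecidableEq ι]
    (f : (ι → ℝ) → ℝ) (u : ι → ℝ) : ι → ℝ :=
  fun i => fderiv ℝ f u (Pi.single i 1)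

/-- The Hessian matrix of a scalar function: `(hessM f u) j k = ∂²f/∂uⱼ∂u_k (u)`. -/
noncomputable def hessM {ι : Type*} [Fintype ι] [DecidableEq ι]
    (f : (ι → ℝ) → ℝ) (u : ι → ℝ) : Matrix ι ι ℝ :=
  Matrix.of fun j k => fderiv ℝ (fun x => fderiv ℝ f x (Pi.single k 1)) u (Pi.single j 1)

open Filter Topology

section Calculus

variable {ι : Type*} [Fintype ι] [DecidableEq ι]

theorem dotProduct_apply_single (L : (ι → ℝ) →L[ℝ] ℝ) (w : ι → ℝ) :
    (fun i => L (Pi.single i 1)) ⬝ᵥ w = L w := by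
  conv_rhs => rw [pi_eq_sum_univ' w]
  simp [dotProduct, map_sum, mul_comm]

theorem gradV_dotProduct (f : (ι → ℝ) → ℝ) (u w : ι → ℝ) :
    gradV f u ⬝ᵥ w = fderiv ℝ f u w :=
  dotProduct_apply_single _ w

theorem fderiv_eq_zero_of_gradV_eq_zero {f : (ι → ℝ) → ℝ} {u : ι → ℝ} (h : gradV f u = 0) :
    fderiv ℝ f u = 0 := by
  ext w
  simp [← gradV_dotProduct, h]

theorem jacM_mulVec (f : (ι → ℝ) → ι → ℝ) (u v : ι → ℝ) :
    jacM f u *ᵥ v = fderiv ℝ f u v :=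
  LinearMap.toMatrix'_mulVec (fderiv ℝ f u : (ι → ℝ) →ₗ[ℝ] ι → ℝ) v

theorem hessM_apply {f : (ι → ℝ) → ℝ} {u : ι → ℝ} (hf : DifferentiableAt ℝ (fderiv ℝ f) u)
    (j k : ι) :
    hessM f u j k = fderiv ℝ (fderiv ℝ f) u (Pi.single j 1) (Pi.single k 1) := by
  rw [hessM, of_apply, fderiv_clm_apply hf (differentiableAt_const _)]
  simp

theorem dotProduct_hessM_mulVec {f : (ι → ℝ) → ℝ} {u : ι → ℝ}
    (hf : DifferentiableAt ℝ (fderiv ℝ f) u) (w z : ι → ℝ) :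
    w ⬝ᵥ (hessM f u *ᵥ z) = fderiv ℝ (fderiv ℝ f) u w z := by
  have hrow : hessM f u *ᵥ z = fun j => fderiv ℝ (fderiv ℝ f) u (Pi.single j 1) z := by
    ext j
    rw [← dotProduct_apply_single]
    simp only [mulVec, dotProduct, hessM_apply hf]
  rw [hrow, dotProduct_comm]
  exact dotProduct_apply_single ((fderiv ℝ (fderiv ℝ f) u).flip z) w

theorem hessM_isSymm {f : (ι → ℝ) → ℝ} {u : ι → ℝ} (hf : ContDiffAt ℝ 2 f u) :
    (hessM f u).IsSymm := by
  have hf' : DifferentiableAt ℝ (fderiv ℝ f) u :=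
    (hf.fderiv_right (m := 1) le_rfl).differentiableAt one_ne_zero
  refine IsSymm.ext_iff.2 fun j k => ?_
  rw [hessM_apply hf', hessM_apply hf']
  exact (hf.isSymmSndFDerivAt (by simp)) _ _

end Calculus

section Blowup

variable {E F : Type*} [NormedAddCommGroup E] [NormedSpace ℝ E]
  [NormedAddCommGroup F] [NormedSpace ℝ F]

theorem HasFDerivAt.tendsto_inv_smul_apply_smul {f : E → F} {f' : E →L[ℝ] F}
    (hf : HasFDerivAt f f' 0) (hf0 : f 0 = 0) (v : E) :
    Tendsto (fun t : ℝ => t⁻¹ • f (t • v)) (𝓝[≠] 0) (𝓝 (f' v)) := by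
  have hline : HasDerivAt (fun t : ℝ => f (t • v)) (f' v) 0 := by
    have hsmul : HasDerivAt (fun t : ℝ => t • v) v 0 := by
      simpa using (hasDerivAt_id (0 : ℝ)).smul_const v
    exact hf.comp_hasDerivAt_of_eq (0 : ℝ) hsmul (zero_smul ℝ v).symm
  refine (hasDerivAt_iff_tendsto_slope.1 hline).congr fun t => ?_
  simp [slope, hf0]

theorem apply_le_of_eventually_apply_le {G : E → F →L[ℝ] ℝ} {G' : E →L[ℝ] F →L[ℝ] ℝ}
    {Q : E → F} {Q' : E →L[ℝ] F} {q : F → ℝ} (hq : Continuous q)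
    (hq_smul : ∀ (t : ℝ) (a : F), q (t • a) = t ^ 2 * q a)
    (hG : HasFDerivAt G G' 0) (hQ : HasFDerivAt Q Q' 0) (hG0 : G 0 = 0) (hQ0 : Q 0 = 0)
    (h : ∀ᶠ u in 𝓝 0, G u (Q u) ≤ q (Q u)) (v : E) :
    G' v (Q' v) ≤ q (Q' v) := by
  have hGv := hG.tendsto_inv_smul_apply_smul hG0 v
  have hQv := hQ.tendsto_inv_smul_apply_smul hQ0 v
  have hline : ∀ᶠ t : ℝ in 𝓝[≠] 0, G (t • v) (Q (t • v)) ≤ q (Q (t • v)) := by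
    have hray : Tendsto (fun t : ℝ => t • v) (𝓝 0) (𝓝 0) :=
      (continuous_id.smul continuous_const).tendsto' 0 0 (zero_smul ℝ v)
    exact (hray.eventually h).filter_mono nhdsWithin_le_nhds
  refine le_of_tendsto_of_tendsto
    ((isBoundedBilinearMap_apply.continuous.tendsto _).comp (hGv.prodMk_nhds hQv))
    ((hq.tendsto _).comp hQv) ?_
  filter_upwards [hline] with t ht
  -- rescaling by `t⁻¹` multiplies both sides by `t⁻² ≥ 0`
  simp only [Function.comp_apply, _root_.smul_apply, map_smul, smul_eq_mul, hq_smul]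
  rw [← mul_assoc, ← sq]
  exact mul_le_mul_of_nonneg_left ht (sq_nonneg _)

end Blowup

theorem dotProduct_hessM_mul_jacM_mulVec_le {ι : Type*} [Fintype ι] [DecidableEq ι]
    {η : (ι → ℝ) → ℝ} {Q : (ι → ℝ) → ι → ℝ} {c : ℝ}
    (hη : ContDiffAt ℝ 2 η 0) (hgrad0 : gradV η 0 = 0)
    (hQ : DifferentiableAt ℝ Q 0) (hQ0 : Q 0 = 0)
    (hdiss : ∀ᶠ u in 𝓝 0, gradV η u ⬝ᵥ Q u ≤ -c * (Q u ⬝ᵥ Q u)) (v : ι → ℝ) :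
    v ⬝ᵥ ((hessM η 0 * jacM Q 0) *ᵥ v) ≤ -c * ((jacM Q 0 *ᵥ v) ⬝ᵥ (jacM Q 0 *ᵥ v)) := by
  have hη' : DifferentiableAt ℝ (fderiv ℝ η) 0 :=
    (hη.fderiv_right (m := 1) le_rfl).differentiableAt one_ne_zero
  rw [← mulVec_mulVec, dotProduct_hessM_mulVec hη', jacM_mulVec]
  refine apply_le_of_eventually_apply_le (q := fun a => -c * (a ⬝ᵥ a)) (by fun_prop)
    (fun t a => by simp only [smul_dotProduct, dotProduct_smul, smul_eq_mul]; ring)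
    hη'.hasFDerivAt hQ.hasFDerivAt (fderiv_eq_zero_of_gradV_eq_zero hgrad0) hQ0 ?_ v
  simpa only [gradV_dotProduct] using hdiss

section Blocks

variable {ι κ : Type*} {B : Matrix (ι ⊕ κ) (ι ⊕ κ) ℝ}

theorem Matrix.IsSymm.transpose_toBlocks₁₂ (hB : B.IsSymm) : B.toBlocks₁₂ᵀ = B.toBlocks₂₁ :=
  (isSymm_fromBlocks_iff.1 ((fromBlocks_toBlocks B).symm ▸ hB)).2.1

theorem Matrix.IsSymm.toBlocks₂₂ (hB : B.IsSymm) : B.toBlocks₂₂.IsSymm :=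
  (isSymm_fromBlocks_iff.1 ((fromBlocks_toBlocks B).symm ▸ hB)).2.2.2

variable [Fintype κ]

theorem Matrix.IsSymm.transpose_mul_toBlocks₂₁_eq_zero (hB : B.IsSymm) {Θ : Matrix κ κ ℝ}
    (h₁₂ : B.toBlocks₁₂ * Θ = 0) : Θᵀ * B.toBlocks₂₁ = 0 := by
  rw [← hB.transpose_toBlocks₁₂, ← transpose_mul, h₁₂, transpose_zero]

variable (B) in
/-- The matrix `M` of the dissipative structure lemma. -/
def dissipationMatrix (Θ : Matrix κ κ ℝ) : Matrix κ κ ℝ :=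
  -(B.toBlocks₂₂ * Θ + Θᵀ * B.toBlocks₂₂)

theorem dissipationMatrix_isSymm (hB : B.IsSymm) (Θ : Matrix κ κ ℝ) :
    (dissipationMatrix B Θ).IsSymm := by
  rw [dissipationMatrix, IsSymm, transpose_neg, transpose_add, transpose_mul, transpose_mul,
    transpose_transpose, hB.toBlocks₂₂.eq, add_comm]

theorem dotProduct_dissipationMatrix_mulVec (hB : B.IsSymm) (Θ : Matrix κ κ ℝ) (y : κ → ℝ) :
    y ⬝ᵥ (dissipationMatrix B Θ *ᵥ y) = -2 * (y ⬝ᵥ ((B.toBlocks₂₂ * Θ) *ᵥ y)) := by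
  have hswap : y ⬝ᵥ ((Θᵀ * B.toBlocks₂₂) *ᵥ y) = y ⬝ᵥ ((B.toBlocks₂₂ * Θ) *ᵥ y) := by
    rw [dotProduct_mulVec, ← mulVec_transpose, transpose_mul, transpose_transpose,
      hB.toBlocks₂₂.eq, dotProduct_comm]
  rw [dissipationMatrix, neg_mulVec, add_mulVec, dotProduct_neg, dotProduct_add, hswap]
  ring

variable [Fintype ι]

theorem Matrix.eq_zero_of_forall_dotProduct_mulVec_le [DecidableEq κ] {A : Matrix ι κ ℝ}
    {g : (κ → ℝ) → ℝ} (h : ∀ x y, x ⬝ᵥ (A *ᵥ y) ≤ g y) : A = 0 := by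
  refine ext_of_mulVec_single fun j => ?_
  rw [zero_mulVec]
  set w := A *ᵥ Pi.single j 1
  -- along `x = t • w` the left side is `t * (w ⬝ᵥ w)`, unbounded unless `w = 0`
  have hbound : ∀ t : ℝ, t * (w ⬝ᵥ w) ≤ g (Pi.single j 1) := fun t => by
    simpa only [smul_dotProduct, smul_eq_mul] using h (t • w) (Pi.single j 1)
  by_contra hw
  have hpos : 0 < w ⬝ᵥ w := by
    simpa only [star_trivial] using dotProduct_star_self_pos_iff.2 hw
  have := hbound ((g (Pi.single j 1) + 1) / (w ⬝ᵥ w))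
  rw [div_mul_cancel₀ _ hpos.ne'] at this
  linarith

variable (B) in
theorem sumElim_dotProduct_mul_fromBlocks_mulVec (Θ : Matrix κ κ ℝ) (x : ι → ℝ) (y : κ → ℝ) :
    (x ⊕ᵥ y) ⬝ᵥ ((B * fromBlocks 0 0 0 Θ) *ᵥ (x ⊕ᵥ y)) =
      x ⬝ᵥ ((B.toBlocks₁₂ * Θ) *ᵥ y) + y ⬝ᵥ ((B.toBlocks₂₂ * Θ) *ᵥ y) := by
  conv_lhs => rw [← fromBlocks_toBlocks B]
  simp [fromBlocks_multiply, fromBlocks_mulVec, sumElim_dotProduct_sumElim]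

theorem fromBlocks_zero_mulVec_sumElim (Θ : Matrix κ κ ℝ) (x : ι → ℝ) (y : κ → ℝ) :
    fromBlocks 0 0 0 Θ *ᵥ (x ⊕ᵥ y) = (0 : ι → ℝ) ⊕ᵥ (Θ *ᵥ y) := by
  simp [fromBlocks_mulVec]

theorem mul_fromBlocks_add_transpose_mul (hB : B.IsSymm) {Θ : Matrix κ κ ℝ}
    (h₁₂ : B.toBlocks₁₂ * Θ = 0) :
    B * fromBlocks 0 0 0 Θ + (fromBlocks 0 0 0 Θ)ᵀ * B =
      -fromBlocks 0 0 0 (dissipationMatrix B Θ) := by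
  rw [← fromBlocks_toBlocks B, fromBlocks_transpose, fromBlocks_multiply, fromBlocks_multiply,
    fromBlocks_add, fromBlocks_neg]
  simp [h₁₂, hB.transpose_mul_toBlocks₂₁_eq_zero h₁₂, dissipationMatrix]

end Blocks

section QuadraticForms

variable {κ : Type*} [Fintype κ] {M : Matrix κ κ ℝ} {Θ : Matrix κ κ ℝ} {c : ℝ}

theorem Matrix.posDef_of_le_dotProduct_mulVec [DecidableEq κ] (hM : M.IsSymm)
    (hΘ : IsUnit Θ.det) (hc : 0 < c)
    (h : ∀ y, c * ((Θ *ᵥ y) ⬝ᵥ (Θ *ᵥ y)) ≤ y ⬝ᵥ (M *ᵥ y)) : M.PosDef := by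
  refine PosDef.of_dotProduct_mulVec_pos (isHermitian_iff_isSymm.2 hM) fun y hy => ?_
  have hΘy : Θ *ᵥ y ≠ 0 := fun h0 => hy ((mulVec_injective_iff_isUnit.2
    ((isUnit_iff_isUnit_det Θ).2 hΘ)) (h0.trans (mulVec_zero Θ).symm))
  have hpos : 0 < (Θ *ᵥ y) ⬝ᵥ (Θ *ᵥ y) := by
    simpa only [star_trivial] using dotProduct_star_self_pos_iff.2 hΘy
  rw [star_trivial]
  exact (mul_pos hc hpos).trans_le (h y)

theorem Matrix.posSemidef_sub_smul_transpose_mul_self (hM : M.IsSymm)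
    (h : ∀ y, c * ((Θ *ᵥ y) ⬝ᵥ (Θ *ᵥ y)) ≤ y ⬝ᵥ (M *ᵥ y)) :
    (M - c • (Θᵀ * Θ)).PosSemidef := by
  have hsymm : (M - c • (Θᵀ * Θ)).IsSymm := by
    rw [IsSymm, transpose_sub, transpose_smul, transpose_mul, transpose_transpose, hM.eq]
  refine PosSemidef.of_dotProduct_mulVec_nonneg (isHermitian_iff_isSymm.2 hsymm) fun y => ?_
  rw [star_trivial, sub_mulVec, dotProduct_sub, smul_mulVec, dotProduct_smul, smul_eq_mul,
    ← mulVec_mulVec, dotProduct_mulVec y Θᵀ, vecMul_transpose]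
  linarith [h y]

end QuadraticForms

theorem statement3_general (r m : ℕ)
    (η : (Fin r ⊕ Fin m → ℝ) → ℝ)
    (Q : (Fin r ⊕ Fin m → ℝ) → (Fin r ⊕ Fin m → ℝ))
    (Θ : Matrix (Fin m) (Fin m) ℝ) (hΘ : IsUnit Θ.det)
    (c δ : ℝ) (hc : 0 < c) (hδ : 0 < δ)
    (hη : ContDiffAt ℝ 2 η 0)
    (hgrad0 : gradV η 0 = 0)
    (hQdiff : DifferentiableAt ℝ Q 0) (hQ0 : Q 0 = 0)
    (hjac : jacM Q 0 = Matrix.fromBlocks 0 0 0 Θ)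
    (hdiss : ∀ u : Fin r ⊕ Fin m → ℝ, ‖u‖ < δ →
      gradV η u ⬝ᵥ Q u ≤ -c * (Q u ⬝ᵥ Q u)) :
    hessM η 0 * jacM Q 0 + (jacM Q 0)ᵀ * hessM η 0 =
      -(Matrix.fromBlocks 0 0 0
        (-((hessM η 0).toBlocks₂₂ * Θ + Θᵀ * (hessM η 0).toBlocks₂₂))) ∧
    Θᵀ * (hessM η 0).toBlocks₂₁ = 0 ∧
    (-((hessM η 0).toBlocks₂₂ * Θ + Θᵀ * (hessM η 0).toBlocks₂₂)).IsSymm ∧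
    (-((hessM η 0).toBlocks₂₂ * Θ + Θᵀ * (hessM η 0).toBlocks₂₂)).PosDef ∧
    (-((hessM η 0).toBlocks₂₂ * Θ + Θᵀ * (hessM η 0).toBlocks₂₂)
        - (2 * c) • (Θᵀ * Θ)).PosSemidef := by
  set B := hessM η 0
  have hB : B.IsSymm := hessM_isSymm hη
  have hdiss_near : ∀ᶠ u in 𝓝 0, gradV η u ⬝ᵥ Q u ≤ -c * (Q u ⬝ᵥ Q u) :=
    Metric.eventually_nhds_iff.2 ⟨δ, hδ, fun u hu => hdiss u (by simpa using hu)⟩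
  have hblock : ∀ x y, x ⬝ᵥ ((B.toBlocks₁₂ * Θ) *ᵥ y) + y ⬝ᵥ ((B.toBlocks₂₂ * Θ) *ᵥ y) ≤
      -c * ((Θ *ᵥ y) ⬝ᵥ (Θ *ᵥ y)) := fun x y => by
    have h := dotProduct_hessM_mul_jacM_mulVec_le hη hgrad0 hQdiff hQ0 hdiss_near (x ⊕ᵥ y)
    rwa [hjac, sumElim_dotProduct_mul_fromBlocks_mulVec, fromBlocks_zero_mulVec_sumElim,
      sumElim_dotProduct_sumElim, dotProduct_zero, zero_add] at h
  have h₁₂ : B.toBlocks₁₂ * Θ = 0 :=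
    eq_zero_of_forall_dotProduct_mulVec_le fun x y => le_sub_iff_add_le.2 (hblock x y)
  have hM : ∀ y, 2 * c * ((Θ *ᵥ y) ⬝ᵥ (Θ *ᵥ y)) ≤ y ⬝ᵥ (dissipationMatrix B Θ *ᵥ y) := by
    intro y
    have := hblock 0 y
    rw [zero_dotProduct, zero_add] at this
    rw [dotProduct_dissipationMatrix_mulVec hB]
    linarith
  have hMsymm := dissipationMatrix_isSymm hB Θ
  exact ⟨hjac ▸ mul_fromBlocks_add_transpose_mul hB h₁₂,
    hB.transpose_mul_toBlocks₂₁_eq_zero h₁₂, hMsymm,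
    posDef_of_le_dotProduct_mulVec hMsymm hΘ (by positivity) hM,
    posSemidef_sub_smul_transpose_mul_self hMsymm hM⟩

/-- Dissipative structure lemma: with `n = r + m`, `η` C² near `0`,
`∇η(0) = 0`, `B := ∇²η(0)` positive definite, `Q(0) = 0`, `∇Q(0) = [[0,0],[0,Θ]]` with `Θ`
invertible, and the entropy dissipation inequality `∇η(u)·Q(u) ≤ −c|Q(u)|²` for `|u| < δ`,
one has `B∇Q(0) + ∇Q(0)ᵀB = −[[0,0],[0,M]]` with `M := −(B₄Θ + ΘᵀB₄)`; in particular
`ΘᵀB₂ = 0`; moreover `M` is symmetric positive definite and `M ≥ 2c ΘᵀΘ`. -/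
theorem statement3 (r m : ℕ) (hr : 1 ≤ r) (hm : 1 ≤ m)
    (η : (Fin r ⊕ Fin m → ℝ) → ℝ)
    (Q : (Fin r ⊕ Fin m → ℝ) → (Fin r ⊕ Fin m → ℝ))
    (Θ : Matrix (Fin m) (Fin m) ℝ) (hΘ : IsUnit Θ.det)
    (c δ : ℝ) (hc : 0 < c) (hδ : 0 < δ)
    (hη : ContDiffAt ℝ 2 η 0)
    (hgrad0 : gradV η 0 = 0)
    (hB : (hessM η 0).PosDef)
    (hQdiff : DifferentiableAt ℝ Q 0) (hQ0 : Q 0 = 0)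
    (hjac : jacM Q 0 = Matrix.fromBlocks 0 0 0 Θ)
    (hdiss : ∀ u : Fin r ⊕ Fin m → ℝ, ‖u‖ < δ →
      gradV η u ⬝ᵥ Q u ≤ -c * (Q u ⬝ᵥ Q u)) :
    hessM η 0 * jacM Q 0 + (jacM Q 0)ᵀ * hessM η 0 =
      -(Matrix.fromBlocks 0 0 0
        (-((hessM η 0).toBlocks₂₂ * Θ + Θᵀ * (hessM η 0).toBlocks₂₂))) ∧
    Θᵀ * (hessM η 0).toBlocks₂₁ = 0 ∧
    (-((hessM η 0).toBlocks₂₂ * Θ + Θᵀ * (hessM η 0).toBlocks₂₂)).IsSymm ∧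
    (-((hessM η 0).toBlocks₂₂ * Θ + Θᵀ * (hessM η 0).toBlocks₂₂)).PosDef ∧
    (-((hessM η 0).toBlocks₂₂ * Θ + Θᵀ * (hessM η 0).toBlocks₂₂)
        - (2 * c) • (Θᵀ * Θ)).PosSemidef :=
  statement3_general r m η Q Θ hΘ c δ hc hδ hη hgrad0 hQdiff hQ0 hjac hdiss
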